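/- arXiv:2510.20802 — 2 statements merged into one kernel-verified Lean document; each statement's English description precedes it below -/
import Mathlib

section
/- Let G be a long-refinement graph, p minimal with all classes of π^p of size at most 2, ≺ the splitting order on the pairs, P_1 the first pair, and P_a, P_b (1 < a < b) the pairs from the split of C_{p-1}. Then the pair P_2 (second in the splitting order) is distinct from P_a and from P_b, and consequently π^p contains at least 4 pairs. -/
/-!
In a long-refinement graph the number of colour classes grows by exactly one per round, so every
round splits a single class into two. Let `P₁ = {u₁, u₂}` and `P₂ = {v₁, v₂}` be the pairs split in
rounds `p + 1` and `p + 2`. Two vertices separated in round `i + 2` are told apart by a class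
created in round `i + 1`, and hence by both halves of the class split there. So `P₁` is unbalanced
with respect to `A` and `B`, and `P₂` with respect to `{u₁}` and `{u₂}`, i.e. each `uᵢ` has exactly
one neighbour in `P₂`. Since `P₁` is balanced with respect to `P₂` and to itself, neither equals
`A` or `B`. Finally `|A| = |B| = 2`: if `A = {a'}` and `B = {b₁, b₂}`, then `B` is still a class
of `π^{p+2}`, each `uᵢ` sees both or none of `b₁, b₂`, and balance of `P₁` on `C = A ∪ B` would
force balance on `A`.
-/

variable {V : Type*}

/-- Colour Refinement equivalence: `crRel G i u v` means `u` and `v` get the same colour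
after `i` iterations of Colour Refinement on `G` (starting monochromatic). -/
def crRel (G : SimpleGraph V) : ℕ → V → V → Prop
  | 0 => fun _ _ => True
  | (i+1) => fun u v => crRel G i u v ∧ ∀ w : V,
      Nat.card {x : V // G.Adj u x ∧ crRel G i x w} =
      Nat.card {x : V // G.Adj v x ∧ crRel G i x w}

/-- The colour class of `v` after `i` iterations. -/
def crClass (G : SimpleGraph V) (i : ℕ) (v : V) : Set V :=
  {u : V | crRel G i u v}

/-- The partition `π^i` induced by the colouring after `i` iterations. -/
def crPartition (G : SimpleGraph V) (i : ℕ) : Set (Set V) :=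
  {C : Set V | ∃ v : V, C = crClass G i v}

/-- `G` is a long-refinement graph: Colour Refinement takes exactly `n - 1` iterations
to stabilise. -/
def IsLongRefinement [Fintype V] (G : SimpleGraph V) : Prop :=
  (∀ i < Fintype.card V - 1, crPartition G (i+1) ≠ crPartition G i) ∧
  crPartition G (Fintype.card V) = crPartition G (Fintype.card V - 1)

/-- The degree of a vertex. -/
noncomputable def vdeg (G : SimpleGraph V) (v : V) : ℕ :=
  Nat.card {u : V // G.Adj v u}

/-- `degOn G C C' k` : every vertex of `C` has exactly `k` neighbours in `C'`,
i.e. `deg_{C'}(C) = k`. -/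
def degOn (G : SimpleGraph V) (C C' : Set V) (k : ℕ) : Prop :=
  ∀ v ∈ C, Nat.card {x : V // x ∈ C' ∧ G.Adj v x} = k

/-- `C` is balanced with respect to `C'`: `deg_{C'}(C)` is defined. -/
def BalancedWrt (G : SimpleGraph V) (C C' : Set V) : Prop :=
  ∃ k, degOn G C C' k

theorem Function.Surjective.exists_unique_collision_of_natCard_eq_add_one {α β : Type*}
    [Finite α] {f : α → β} (hf : Function.Surjective f) (hcard : Nat.card α = Nat.card β + 1) :
    ∃ a₁ a₂, a₁ ≠ a₂ ∧ f a₁ = f a₂ ∧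
      ∀ x y, x ≠ y → f x = f y → x = a₁ ∧ y = a₂ ∨ x = a₂ ∧ y = a₁ := by
  obtain ⟨a₁, a₂, hfa, hne⟩ : ∃ a₁ a₂, f a₁ = f a₂ ∧ a₁ ≠ a₂ := by
    by_contra! hinj
    have := Nat.card_eq_of_bijective f ⟨fun x y => hinj x y, hf⟩
    omega
  have hinjOn : Set.InjOn f {a₂}ᶜ := by
    refine Set.injOn_of_ncard_image_eq ?_
    have himage : f '' {a₂}ᶜ = Set.univ := by
      refine Set.eq_univ_of_forall fun b => ?_
      obtain ⟨x, rfl⟩ := hf b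
      by_cases hx : x = a₂
      · exact ⟨a₁, hne, hx ▸ hfa⟩
      · exact ⟨x, hx, rfl⟩
    rw [himage, Set.ncard_univ, Set.ncard_compl, Set.ncard_singleton]
    omega
  refine ⟨a₁, a₂, hne, hfa, fun x y hxy hfxy => ?_⟩
  by_cases hx : x = a₂
  · subst hx
    exact Or.inr ⟨rfl, hinjOn (Ne.symm hxy) hne (hfxy.symm.trans hfa.symm)⟩
  by_cases hy : y = a₂
  · subst hy
    exact Or.inl ⟨hinjOn hx hne (hfxy.trans hfa.symm), rfl⟩
  exact absurd (hinjOn hx hy hfxy) hxy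

theorem Nat.apply_add_one_eq_of_increasing {f : ℕ → ℕ} {m : ℕ}
    (hf : ∀ j < m, f j < f (j + 1)) (hm : f m ≤ f 0 + m) {i : ℕ} (hi : i < m) :
    f (i + 1) = f i + 1 := by
  have hgap : ∀ j l, j ≤ l → l ≤ m → f j + (l - j) ≤ f l := by
    intro j l hjl hlm
    induction l, hjl using Nat.le_induction with
    | base => simp
    | succ l hjl ih => have := hf l (by omega); have := ih (by omega); omega
  have := hgap 0 i (Nat.zero_le i) hi.le
  have := hgap (i + 1) m hi le_rfl
  have := hf i hi
  omega

namespace Setoid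

variable {α : Type*} {r s : Setoid α} {a b x y : α} {X Y : Set α}

theorem natCard_quotient_lt_of_lt [Finite α] (h : r < s) :
    Nat.card (Quotient s) < Nat.card (Quotient r) := by
  have hf := Quotient.map_surjective (sa := r) (sb := s) (f := id) (fun _ _ hxy => h.le hxy)
    Function.surjective_id
  refine (Nat.card_le_card_of_surjective _ hf).lt_of_ne fun heq => h.not_ge fun x y hxy => ?_
  exact Quotient.exact ((hf.bijective_of_nat_card_le heq.ge).injective
    (Quotient.sound (s := s) hxy : Quotient.mk s x = Quotient.mk s y))

theorem setOf_rel_eq_pair [Finite α] (hrs : r ≤ s) (hs : {x | s x a}.ncard ≤ 2) (hab : r a b)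
    (hne : a ≠ b) : {x | r x a} = {a, b} := by
  symm
  refine Set.eq_of_subset_of_ncard_le ?_ ?_ (Set.toFinite _)
  · rintro x (rfl | rfl)
    exacts [r.refl x, r.symm hab]
  · rw [Set.ncard_pair hne]
    exact (Set.ncard_le_ncard (fun x hx => hrs hx) (Set.toFinite _)).trans hs

theorem notMem_classes_of_union_mem_classes (hX : X ∈ r.classes) (hY : Y ∈ r.classes)
    (hXY : X ≠ Y) (hs : X ∪ Y ∈ s.classes) : X ∉ s.classes := by
  intro hXs
  obtain ⟨x, hx⟩ := nonempty_of_mem_partition (isPartition_classes r) hX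
  obtain ⟨y, hy⟩ := nonempty_of_mem_partition (isPartition_classes r) hY
  have hXY' : X = X ∪ Y := eq_of_mem_classes hXs hx hs (Or.inl hx)
  exact hXY (eq_of_mem_classes hX (hXY' ▸ Or.inr hy : y ∈ X) hY hy)

/-- Refining `s` to `r` splits a single class of `s`, that of `a` and `b`, into the `r`-classes
of `a` and `b`. -/
structure IsSingleSplit (r s : Setoid α) (a b : α) : Prop where
  le : r ≤ s
  rel : s a b
  not_rel : ¬ r a b
  split : ∀ ⦃x y⦄, s x y → ¬ r x y → r x a ∧ r y b ∨ r x b ∧ r y a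

theorem exists_isSingleSplit [Finite α] (hrs : r ≤ s)
    (hcard : Nat.card (Quotient r) = Nat.card (Quotient s) + 1) : ∃ a b, IsSingleSplit r s a b := by
  obtain ⟨⟨a⟩, ⟨b⟩, hne, hab, hsplit⟩ :=
    (Quotient.map_surjective (sa := r) (sb := s) (f := id) (fun _ _ hxy => hrs hxy)
      Function.surjective_id).exists_unique_collision_of_natCard_eq_add_one hcard
  refine ⟨a, b, hrs, Quotient.exact hab, fun h => hne (Quotient.sound h), fun x y hxy hxy' => ?_⟩
  rcases hsplit (Quotient.mk r x) (Quotient.mk r y) (fun h => hxy' (Quotient.exact h))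
    (Quotient.sound hxy) with ⟨hx, hy⟩ | ⟨hx, hy⟩
  exacts [Or.inl ⟨Quotient.exact hx, Quotient.exact hy⟩,
    Or.inr ⟨Quotient.exact hx, Quotient.exact hy⟩]

namespace IsSingleSplit

theorem symm (h : IsSingleSplit r s a b) : IsSingleSplit r s b a :=
  ⟨h.le, s.symm h.rel, fun hba => h.not_rel (r.symm hba),
    fun _ _ hxy hxy' => (h.split hxy hxy').symm⟩

theorem ne (h : IsSingleSplit r s a b) : a ≠ b :=
  fun hab => h.not_rel (hab ▸ r.refl a)

theorem rel_or_rel (h : IsSingleSplit r s a b) (hxy : s x y) (hxy' : ¬ r x y) :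
    r x a ∨ r x b :=
  (h.split hxy hxy').imp And.left And.left

theorem rel_of_not_rel (h : IsSingleSplit r s a b) (hxy : s x y) (hx : ¬ s x a) : r x y := by
  by_contra hxy'
  rcases h.rel_or_rel hxy hxy' with hxa | hxb
  · exact hx (h.le hxa)
  · exact hx (s.trans (h.le hxb) (s.symm h.rel))

theorem setOf_rel_eq_union (h : IsSingleSplit r s a b) :
    {x | s x a} = {x | r x a} ∪ {x | r x b} := by
  ext x
  refine ⟨fun hxa => ?_, ?_⟩
  · by_cases hr : r x a
    · exact Or.inl hr
    · exact Or.inr ((h.rel_or_rel hxa hr).resolve_left hr)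
  · rintro (hxa | hxb)
    · exact h.le hxa
    · exact s.trans (h.le hxb) (s.symm h.rel)

theorem disjoint (h : IsSingleSplit r s a b) : Disjoint {x | r x a} {x | r x b} :=
  Set.disjoint_left.mpr fun _ hxa hxb => h.not_rel (r.trans (r.symm hxa) hxb)

theorem setOf_rel_eq_singleton [Finite α] (h : IsSingleSplit r s a b)
    (hs : {x | s x a}.ncard ≤ 2) : {x | r x a} = {a} := by
  refine Set.eq_singleton_iff_unique_mem.mpr ⟨r.refl a, fun x hxa => ?_⟩
  have hx : x ∈ ({a, b} : Set α) := setOf_rel_eq_pair le_rfl hs h.rel h.ne ▸ h.le hxa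
  rcases hx with rfl | rfl
  exacts [rfl, absurd (r.symm hxa) h.not_rel]

theorem mem_classes_of_ne (h : IsSingleSplit r s a b) (hX : X ∈ s.classes)
    (hXa : X ≠ {x | s x a}) : X ∈ r.classes := by
  obtain ⟨y, rfl⟩ := hX
  have hy : ¬ s y a := fun hya =>
    hXa (eq_of_mem_classes (s.mem_classes y) (s.refl y) (s.mem_classes a) hya)
  convert r.mem_classes y using 1
  ext x
  exact ⟨fun hxy => r.symm (h.rel_of_not_rel (s.symm hxy) hy), fun hxy => h.le hxy⟩

theorem eq_of_mem_classes_of_notMem (h : IsSingleSplit r s a b) (hX : X ∈ r.classes)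
    (hX' : X ∉ s.classes) : X = {x | r x a} ∨ X = {x | r x b} := by
  obtain ⟨y, rfl⟩ := hX
  obtain ⟨x, hxy, hxy'⟩ : ∃ x, s x y ∧ ¬ r x y := by
    by_contra! hy
    have hXs : {x | r x y} = {x | s x y} := Set.ext fun x => ⟨fun hxy => h.le hxy, hy x⟩
    exact hX' (hXs ▸ s.mem_classes y)
  rcases h.rel_or_rel (s.symm hxy) fun hyx => hxy' (r.symm hyx) with hya | hyb
  · exact Or.inl (eq_of_mem_classes (r.mem_classes y) (r.refl y) (r.mem_classes a) hya)
  · exact Or.inr (eq_of_mem_classes (r.mem_classes y) (r.refl y) (r.mem_classes b) hyb)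

theorem exists_eq_setOf_of_mem_classes (h : IsSingleSplit r s a b) (hX : X ∈ r.classes)
    (hX' : X ∉ s.classes) (hY : Y ∈ r.classes) (hY' : Y ∉ s.classes) (hXY : X ≠ Y) :
    ∃ a' b', IsSingleSplit r s a' b' ∧ X = {x | r x a'} ∧ Y = {x | r x b'} := by
  rcases h.eq_of_mem_classes_of_notMem hX hX' with rfl | rfl <;>
    rcases h.eq_of_mem_classes_of_notMem hY hY' with rfl | rfl
  exacts [absurd rfl hXY, ⟨a, b, h, rfl, rfl⟩, ⟨b, a, h.symm, rfl, rfl⟩, absurd rfl hXY]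

theorem eq_setOf_of_mem_classes_of_notMem (h : IsSingleSplit r s a b) (hX : X ∈ s.classes)
    (hX' : X ∉ r.classes) : X = {x | s x a} :=
  by_contra fun hXa => hX' (h.mem_classes_of_ne hX hXa)

end IsSingleSplit

end Setoid

namespace SimpleGraph

variable {G : SimpleGraph V} {C X : Set V} {k : ℕ} {u v u₁ u₂ v₁ v₂ a b₁ b₂ : V}

theorem degOn_iff : degOn G C X k ↔ ∀ v ∈ C, (G.neighborSet v ∩ X).ncard = k := by
  simp only [degOn, Set.inter_comm (G.neighborSet _)]
  rfl

theorem balancedWrt_pair_iff :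
    BalancedWrt G {u, v} X ↔ (G.neighborSet u ∩ X).ncard = (G.neighborSet v ∩ X).ncard := by
  simp only [BalancedWrt, degOn_iff, Set.forall_mem_insert, Set.mem_singleton_iff, forall_eq]
  exact ⟨fun ⟨_, hu, hv⟩ => hu.trans hv.symm, fun h => ⟨_, h, rfl⟩⟩

open Classical in
theorem ncard_neighborSet_inter_singleton :
    (G.neighborSet u ∩ {v}).ncard = if G.Adj u v then 1 else 0 := by
  split_ifs with h
  · rw [Set.inter_singleton_of_mem (s := G.neighborSet u) h, Set.ncard_singleton]
  · rw [(Set.inter_singleton_eq_empty (s := G.neighborSet u)).mpr h, Set.ncard_empty]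

theorem ncard_neighborSet_inter_singleton_le_one : (G.neighborSet u ∩ {v}).ncard ≤ 1 := by
  rw [ncard_neighborSet_inter_singleton]
  split_ifs <;> omega

variable [Finite V]

theorem ncard_neighborSet_inter_union (h : Disjoint C X) :
    (G.neighborSet u ∩ (C ∪ X)).ncard =
      (G.neighborSet u ∩ C).ncard + (G.neighborSet u ∩ X).ncard := by
  rw [Set.inter_union_distrib_left, Set.ncard_union_eq]
  exact h.mono Set.inter_subset_right Set.inter_subset_right

theorem ncard_neighborSet_inter_pair (h : v₁ ≠ v₂) :
    (G.neighborSet u ∩ {v₁, v₂}).ncard =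
      (G.neighborSet v₁ ∩ {u}).ncard + (G.neighborSet v₂ ∩ {u}).ncard := by
  rw [Set.insert_eq, ncard_neighborSet_inter_union (Set.disjoint_singleton.mpr h),
    ncard_neighborSet_inter_singleton, ncard_neighborSet_inter_singleton,
    ncard_neighborSet_inter_singleton, ncard_neighborSet_inter_singleton, G.adj_comm u v₁,
    G.adj_comm u v₂]

theorem balancedWrt_pair_self : BalancedWrt G {u, v} {u, v} := by
  rcases eq_or_ne u v with rfl | huv
  · exact balancedWrt_pair_iff.mpr rfl
  rw [balancedWrt_pair_iff, ncard_neighborSet_inter_pair huv, ncard_neighborSet_inter_pair huv,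
    ncard_neighborSet_inter_singleton, ncard_neighborSet_inter_singleton,
    ncard_neighborSet_inter_singleton, ncard_neighborSet_inter_singleton]
  rw [G.adj_comm v u]
  simp

theorem degOn_pair_eq_one (hv : v₁ ≠ v₂) (h₁ : ¬ BalancedWrt G {v₁, v₂} {u₁})
    (h₂ : ¬ BalancedWrt G {v₁, v₂} {u₂}) : degOn G {u₁, u₂} {v₁, v₂} 1 := by
  simp only [degOn_iff, Set.forall_mem_insert, Set.mem_singleton_iff, forall_eq,
    ncard_neighborSet_inter_pair hv]
  rw [balancedWrt_pair_iff] at h₁ h₂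
  have := ncard_neighborSet_inter_singleton_le_one (G := G) (u := v₁) (v := u₁)
  have := ncard_neighborSet_inter_singleton_le_one (G := G) (u := v₂) (v := u₁)
  have := ncard_neighborSet_inter_singleton_le_one (G := G) (u := v₁) (v := u₂)
  have := ncard_neighborSet_inter_singleton_le_one (G := G) (u := v₂) (v := u₂)
  omega

/-- Parity: each `uᵢ` sees an even number of `b₁, b₂`, so only `a` can tell `u₁` and `u₂` apart
in `{a, b₁, b₂}`. -/
theorem balancedWrt_singleton_of_insert (hb : b₁ ≠ b₂) (ha : a ∉ ({b₁, b₂} : Set V))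
    (h : BalancedWrt G {u₁, u₂} (insert a {b₁, b₂})) (h₁ : BalancedWrt G {b₁, b₂} {u₁})
    (h₂ : BalancedWrt G {b₁, b₂} {u₂}) : BalancedWrt G {u₁, u₂} {a} := by
  rw [balancedWrt_pair_iff] at h h₁ h₂ ⊢
  rw [Set.insert_eq, ncard_neighborSet_inter_union (Set.disjoint_singleton_left.mpr ha),
    ncard_neighborSet_inter_union (Set.disjoint_singleton_left.mpr ha),
    ncard_neighborSet_inter_pair hb, ncard_neighborSet_inter_pair hb] at h
  have := ncard_neighborSet_inter_singleton_le_one (G := G) (u := u₁) (v := a)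
  have := ncard_neighborSet_inter_singleton_le_one (G := G) (u := u₂) (v := a)
  omega

end SimpleGraph

section ColourRefinement

variable {G : SimpleGraph V} {i j : ℕ} {u v a b : V} {X : Set V}

theorem crRel_equivalence (G : SimpleGraph V) (i : ℕ) : Equivalence (crRel G i) := by
  induction i with
  | zero => exact ⟨fun _ => trivial, fun _ => trivial, fun _ _ => trivial⟩
  | succ i ih =>
    exact ⟨fun _ => ⟨ih.refl _, fun _ => rfl⟩, fun h => ⟨ih.symm h.1, fun w => (h.2 w).symm⟩,
      fun h₁ h₂ => ⟨ih.trans h₁.1 h₂.1, fun w => (h₁.2 w).trans (h₂.2 w)⟩⟩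

def crSetoid (G : SimpleGraph V) (i : ℕ) : Setoid V :=
  ⟨crRel G i, crRel_equivalence G i⟩

theorem crSetoid_succ_le (G : SimpleGraph V) (i : ℕ) : crSetoid G (i + 1) ≤ crSetoid G i :=
  fun _ _ h => h.1

theorem crSetoid_antitone (G : SimpleGraph V) : Antitone (crSetoid G) :=
  antitone_nat_of_succ_le (crSetoid_succ_le G)

theorem crPartition_eq_iff : crPartition G i = crPartition G j ↔ crRel G i = crRel G j :=
  show (crSetoid G i).classes = (crSetoid G j).classes ↔ ⇑(crSetoid G i) = ⇑(crSetoid G j) from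
    Setoid.classes_inj.symm.trans Setoid.eq_iff_rel_eq

theorem mem_crClass_self (G : SimpleGraph V) (i : ℕ) (v : V) : v ∈ crClass G i v :=
  (crRel_equivalence G i).refl v

theorem crRel_of_mem (hX : X ∈ crPartition G i) (hu : u ∈ X) (hv : v ∈ X) : crRel G i u v :=
  (Setoid.rel_iff_exists_classes (crSetoid G i)).mpr ⟨X, hX, hu, hv⟩

theorem crRel_succ_congr (h : crRel G i = crRel G j) : crRel G (i + 1) = crRel G (j + 1) := by
  funext u v
  change (crRel G i u v ∧ _) = (crRel G j u v ∧ _)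
  rw [h]

theorem crRel_eq_of_le (h : crRel G (i + 1) = crRel G i) (hij : i ≤ j) :
    crRel G j = crRel G i := by
  induction j, hij using Nat.le_induction with
  | base => rfl
  | succ j hij ih => rw [crRel_succ_congr ih, h]

theorem natCard_quotient_crSetoid_zero [Nonempty V] : Nat.card (Quotient (crSetoid G 0)) = 1 := by
  obtain ⟨v⟩ := ‹Nonempty V›
  refine Nat.card_eq_one_iff_unique.mpr ⟨⟨fun x y => ?_⟩, ⟨Quotient.mk _ v⟩⟩
  induction x, y using Quotient.inductionOn₂
  exact Quotient.sound trivial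

theorem balancedWrt_pair_of_crRel_succ (huv : crRel G (i + 1) u v) (hX : X ∈ crPartition G i) :
    BalancedWrt G {u, v} X := by
  obtain ⟨w, rfl⟩ := hX
  exact SimpleGraph.balancedWrt_pair_iff.mpr (huv.2 w)

theorem crClass_eq_pair [Finite V] (hp : ∀ C ∈ crPartition G i, C.ncard ≤ 2) (hij : i ≤ j)
    (huv : crRel G j u v) (hne : u ≠ v) : crClass G j u = {u, v} :=
  Setoid.setOf_rel_eq_pair (crSetoid_antitone G hij) (hp _ ⟨u, rfl⟩) huv hne

theorem crClass_eq_union_of_isSingleSplit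
    (hs : (crSetoid G (i + 1)).IsSingleSplit (crSetoid G i) a b) :
    crClass G i a = crClass G (i + 1) a ∪ crClass G (i + 1) b :=
  hs.setOf_rel_eq_union

theorem disjoint_crClass_of_isSingleSplit
    (hs : (crSetoid G (i + 1)).IsSingleSplit (crSetoid G i) a b) :
    Disjoint (crClass G (i + 1) a) (crClass G (i + 1) b) :=
  hs.disjoint

theorem not_balancedWrt_of_isSingleSplit [Finite V]
    (hs : (crSetoid G (i + 1)).IsSingleSplit (crSetoid G i) a b)
    (huv : crRel G (i + 1) u v) (huv' : ¬ crRel G (i + 2) u v) :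
    ¬ BalancedWrt G {u, v} (crClass G (i + 1) a) ∧
      ¬ BalancedWrt G {u, v} (crClass G (i + 1) b) := by
  obtain ⟨w, hw⟩ : ∃ w, ¬ BalancedWrt G {u, v} (crClass G (i + 1) w) := by
    by_contra! hbal
    exact huv' ⟨huv, fun w => SimpleGraph.balancedWrt_pair_iff.mp (hbal w)⟩
  have hnew : crClass G (i + 1) w ∉ crPartition G i := fun hold =>
    hw (balancedWrt_pair_of_crRel_succ huv hold)
  have hC := balancedWrt_pair_of_crRel_succ huv ⟨a, rfl⟩
  have hab : crClass G (i + 1) w = crClass G (i + 1) a ∨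
      crClass G (i + 1) w = crClass G (i + 1) b :=
    hs.eq_of_mem_classes_of_notMem ⟨w, rfl⟩ hnew
  rw [crClass_eq_union_of_isSingleSplit hs] at hC
  simp only [SimpleGraph.balancedWrt_pair_iff,
    SimpleGraph.ncard_neighborSet_inter_union (disjoint_crClass_of_isSingleSplit hs)] at hC hw ⊢
  rcases hab with h | h <;> rw [h] at hw <;> omega

end ColourRefinement

section LongRefinement

variable [Fintype V] [Nonempty V] {G : SimpleGraph V} {i : ℕ}

theorem IsLongRefinement.lt_card_of_crPartition_ne (h : IsLongRefinement G)
    (hne : crPartition G (i + 1) ≠ crPartition G i) : i + 1 < Fintype.card V := by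
  by_contra! hi
  have hstab : crRel G (Fintype.card V - 1 + 1) = crRel G (Fintype.card V - 1) := by
    rw [Nat.sub_add_cancel Fintype.card_pos]
    exact crPartition_eq_iff.mp h.2
  exact hne (crPartition_eq_iff.mpr
    ((crRel_eq_of_le hstab (by omega)).trans (crRel_eq_of_le hstab (by omega)).symm))

theorem IsLongRefinement.natCard_quotient_succ (h : IsLongRefinement G)
    (hi : i + 1 < Fintype.card V) :
    Nat.card (Quotient (crSetoid G (i + 1))) = Nat.card (Quotient (crSetoid G i)) + 1 := by
  refine Nat.apply_add_one_eq_of_increasing (f := fun j => Nat.card (Quotient (crSetoid G j)))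
    (m := Fintype.card V - 1) (fun j hj => ?_) ?_ (by omega)
  · refine Setoid.natCard_quotient_lt_of_lt ((crSetoid_succ_le G j).lt_of_ne fun heq => ?_)
    exact h.1 j hj (crPartition_eq_iff.mpr (Setoid.eq_iff_rel_eq.mp heq))
  · calc Nat.card (Quotient (crSetoid G (Fintype.card V - 1)))
        ≤ Nat.card V := Nat.card_le_card_of_surjective _ Quotient.mk_surjective
      _ = Nat.card (Quotient (crSetoid G 0)) + (Fintype.card V - 1) := by
        rw [natCard_quotient_crSetoid_zero, Nat.card_eq_fintype_card]
        have := Fintype.card_pos (α := V)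
        omega

theorem IsLongRefinement.exists_isSingleSplit (h : IsLongRefinement G)
    (hi : i + 1 < Fintype.card V) :
    ∃ a b, (crSetoid G (i + 1)).IsSingleSplit (crSetoid G i) a b :=
  Setoid.exists_isSingleSplit (crSetoid_succ_le G i) (h.natCard_quotient_succ hi)

end LongRefinement

section ThreeSplits

variable [Finite V] {G : SimpleGraph V} {k : ℕ} {a b u₁ u₂ v₁ v₂ : V}

theorem degOn_eq_one_of_isSingleSplit (hp : ∀ C ∈ crPartition G (k + 1), C.ncard ≤ 2)
    (s₁ : (crSetoid G (k + 2)).IsSingleSplit (crSetoid G (k + 1)) u₁ u₂)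
    (s₂ : (crSetoid G (k + 3)).IsSingleSplit (crSetoid G (k + 2)) v₁ v₂) :
    degOn G {u₁, u₂} {v₁, v₂} 1 := by
  have h := not_balancedWrt_of_isSingleSplit s₁ s₂.rel s₂.not_rel
  have h₁ : crClass G (k + 2) u₁ = {u₁} := s₁.setOf_rel_eq_singleton (hp _ ⟨u₁, rfl⟩)
  have h₂ : crClass G (k + 2) u₂ = {u₂} := s₁.symm.setOf_rel_eq_singleton (hp _ ⟨u₂, rfl⟩)
  rw [h₁, h₂] at h
  exact SimpleGraph.degOn_pair_eq_one s₂.ne h.1 h.2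

theorem crClass_ne_crClass_of_isSingleSplit (hp : ∀ C ∈ crPartition G (k + 1), C.ncard ≤ 2)
    (s₀ : (crSetoid G (k + 1)).IsSingleSplit (crSetoid G k) a b)
    (s₁ : (crSetoid G (k + 2)).IsSingleSplit (crSetoid G (k + 1)) u₁ u₂)
    (s₂ : (crSetoid G (k + 3)).IsSingleSplit (crSetoid G (k + 2)) v₁ v₂) :
    crClass G (k + 2) v₁ ≠ crClass G (k + 1) a ∧ crClass G (k + 2) v₁ ≠ crClass G (k + 1) b := by
  have hunbal := not_balancedWrt_of_isSingleSplit s₀ s₁.rel s₁.not_rel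
  have hbal : BalancedWrt G {u₁, u₂} (crClass G (k + 2) v₁) := by
    rw [crClass_eq_pair hp (by omega) s₂.rel s₂.ne]
    exact ⟨1, degOn_eq_one_of_isSingleSplit hp s₁ s₂⟩
  exact ⟨fun h => hunbal.1 (h ▸ hbal), fun h => hunbal.2 (h ▸ hbal)⟩

theorem ncard_crClass_ne_one (hp : ∀ C ∈ crPartition G (k + 1), C.ncard ≤ 2)
    (s₀ : (crSetoid G (k + 1)).IsSingleSplit (crSetoid G k) a b)
    (s₁ : (crSetoid G (k + 2)).IsSingleSplit (crSetoid G (k + 1)) u₁ u₂)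
    (s₂ : (crSetoid G (k + 3)).IsSingleSplit (crSetoid G (k + 2)) v₁ v₂)
    (hb : (crClass G (k + 1) b).ncard = 2) : (crClass G (k + 1) a).ncard ≠ 1 := by
  intro ha
  obtain ⟨a', ha'⟩ := Set.ncard_eq_one.mp ha
  obtain ⟨b₁, b₂, hb₁₂, hb'⟩ := Set.ncard_eq_two.mp hb
  have hunbal := not_balancedWrt_of_isSingleSplit s₀ s₁.rel s₁.not_rel
  have hB : crClass G (k + 1) b ∈ crPartition G (k + 3) := by
    refine s₂.mem_classes_of_ne (s₁.mem_classes_of_ne ⟨b, rfl⟩ ?_) ?_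
    · change _ ≠ crClass G (k + 1) u₁
      rw [crClass_eq_pair hp le_rfl s₁.rel s₁.ne]
      exact fun h => hunbal.2 (by rw [h]; exact SimpleGraph.balancedWrt_pair_self)
    · change _ ≠ crClass G (k + 2) v₁
      rw [crClass_eq_pair hp (by omega) s₂.rel s₂.ne]
      exact fun h => hunbal.2 (by rw [h]; exact ⟨1, degOn_eq_one_of_isSingleSplit hp s₁ s₂⟩)
  have hb₁b₂ : crRel G (k + 3) b₁ b₂ :=
    crRel_of_mem hB (hb' ▸ Set.mem_insert _ _) (hb' ▸ Set.mem_insert_of_mem _ rfl)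
  have hbal : ∀ u, crClass G (k + 2) u = {u} → BalancedWrt G {b₁, b₂} {u} := fun u hu =>
    hu ▸ balancedWrt_pair_of_crRel_succ hb₁b₂ ⟨u, rfl⟩
  have hunion := crClass_eq_union_of_isSingleSplit s₀
  have hdisj := disjoint_crClass_of_isSingleSplit s₀
  rw [ha', hb', Set.disjoint_singleton_left] at hdisj
  rw [ha', hb', Set.singleton_union] at hunion
  refine hunbal.1 (ha' ▸ SimpleGraph.balancedWrt_singleton_of_insert hb₁₂ hdisj ?_
    (hbal u₁ (s₁.setOf_rel_eq_singleton (hp _ ⟨u₁, rfl⟩)))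
    (hbal u₂ (s₁.symm.setOf_rel_eq_singleton (hp _ ⟨u₂, rfl⟩))))
  exact hunion ▸ balancedWrt_pair_of_crRel_succ s₁.rel ⟨a, rfl⟩

theorem ncard_crClass_eq_two (hp : ∀ C ∈ crPartition G (k + 1), C.ncard ≤ 2)
    (hbig : ∃ C ∈ crPartition G k, 2 < C.ncard)
    (s₀ : (crSetoid G (k + 1)).IsSingleSplit (crSetoid G k) a b)
    (s₁ : (crSetoid G (k + 2)).IsSingleSplit (crSetoid G (k + 1)) u₁ u₂)
    (s₂ : (crSetoid G (k + 3)).IsSingleSplit (crSetoid G (k + 2)) v₁ v₂) :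
    (crClass G (k + 1) a).ncard = 2 := by
  obtain ⟨C, hC, hC₂⟩ := hbig
  have hCa : C = crClass G k a :=
    s₀.eq_setOf_of_mem_classes_of_notMem hC fun h => (hp C h).not_gt hC₂
  rw [hCa, crClass_eq_union_of_isSingleSplit s₀,
    Set.ncard_union_eq (disjoint_crClass_of_isSingleSplit s₀)] at hC₂
  have ha := hp _ ⟨a, rfl⟩
  have hb := hp _ ⟨b, rfl⟩
  by_contra hne
  exact ncard_crClass_ne_one hp s₀ s₁ s₂ (by omega) (by omega)

theorem four_le_ncard_pairs (hp : ∀ C ∈ crPartition G (k + 1), C.ncard ≤ 2)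
    (hbig : ∃ C ∈ crPartition G k, 2 < C.ncard)
    (s₀ : (crSetoid G (k + 1)).IsSingleSplit (crSetoid G k) a b)
    (s₁ : (crSetoid G (k + 2)).IsSingleSplit (crSetoid G (k + 1)) u₁ u₂)
    (s₂ : (crSetoid G (k + 3)).IsSingleSplit (crSetoid G (k + 2)) v₁ v₂) :
    4 ≤ {D | D ∈ crPartition G (k + 1) ∧ D.ncard = 2}.ncard := by
  have hunbal := not_balancedWrt_of_isSingleSplit s₀ s₁.rel s₁.not_rel
  have hne : ∀ X, ¬ BalancedWrt G {u₁, u₂} X → X ≠ {u₁, u₂} ∧ X ≠ {v₁, v₂} := fun X hX =>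
    ⟨by rintro rfl; exact hX SimpleGraph.balancedWrt_pair_self,
      by rintro rfl; exact hX ⟨1, degOn_eq_one_of_isSingleSplit hp s₁ s₂⟩⟩
  have hP₁ : crClass G (k + 1) u₁ = {u₁, u₂} := crClass_eq_pair hp le_rfl s₁.rel s₁.ne
  have hP₂ : crClass G (k + 1) v₁ = {v₁, v₂} := crClass_eq_pair hp le_rfl s₂.rel.1 s₂.ne
  have hP₁₂ : ({u₁, u₂} : Set V) ≠ {v₁, v₂} := fun h => s₁.not_rel <|
    crRel_of_mem (X := crClass G (k + 2) v₁) ⟨v₁, rfl⟩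
      (by rw [crClass_eq_pair hp (by omega) s₂.rel s₂.ne, ← h]; exact Set.mem_insert _ _)
      (by rw [crClass_eq_pair hp (by omega) s₂.rel s₂.ne, ← h]; exact Set.mem_insert_of_mem _ rfl)
  have hab : crClass G (k + 1) a ≠ crClass G (k + 1) b := fun h =>
    s₀.not_rel (crRel_of_mem ⟨b, rfl⟩ (h ▸ mem_crClass_self G _ a) (mem_crClass_self G _ b))
  calc 4 = ({crClass G (k + 1) a, crClass G (k + 1) b, {u₁, u₂}, {v₁, v₂}} :
        Set (Set V)).ncard := by
        have ha := hne _ hunbal.1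
        have hb := hne _ hunbal.2
        rw [Set.ncard_insert_of_notMem (by simp [hab, ha.1, ha.2]),
          Set.ncard_insert_of_notMem (by simp [hb.1, hb.2]), Set.ncard_pair hP₁₂]
    _ ≤ _ := by
      refine Set.ncard_le_ncard ?_ (Set.toFinite _)
      rintro D (rfl | rfl | rfl | rfl)
      · exact ⟨⟨a, rfl⟩, ncard_crClass_eq_two hp hbig s₀ s₁ s₂⟩
      · exact ⟨⟨b, rfl⟩, ncard_crClass_eq_two hp hbig s₀.symm s₁ s₂⟩
      · exact ⟨hP₁ ▸ ⟨u₁, rfl⟩, Set.ncard_pair s₁.ne⟩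
      · exact ⟨hP₂ ▸ ⟨v₁, rfl⟩, Set.ncard_pair s₂.ne⟩

end ThreeSplits

theorem second_pair_distinct_general [Fintype V] (G : SimpleGraph V)
    (h : IsLongRefinement G) (p : ℕ)
    (hp : ∀ C ∈ crPartition G p, C.ncard ≤ 2)
    (hpmin : ∀ q < p, ∃ C ∈ crPartition G q, 2 < C.ncard)
    (C A B : Set V)
    (hC : C ∈ crPartition G (p-1))
    (hA : A ∈ crPartition G p)
    (hB : B ∈ crPartition G p)
    (hAB : A ≠ B) (hCAB : C = A ∪ B)
    (P2 : Set V) (hP2 : P2 ∈ crPartition G (p+1)) (hP2' : P2 ∉ crPartition G (p+2)) :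
    P2 ≠ A ∧ P2 ≠ B ∧ 4 ≤ {D | D ∈ crPartition G p ∧ D.ncard = 2}.ncard := by
  subst hCAB
  have hnew : ∀ {X Y : Set V}, X ∈ crPartition G p → Y ∈ crPartition G p → X ≠ Y →
      X ∪ Y ∈ crPartition G (p - 1) → X ∉ crPartition G (p - 1) :=
    Setoid.notMem_classes_of_union_mem_classes (r := crSetoid G p) (s := crSetoid G (p - 1))
  have hA' := hnew hA hB hAB hC
  have hB' := hnew hB hA hAB.symm (Set.union_comm A B ▸ hC)
  obtain ⟨k, rfl⟩ : ∃ k, p = k + 1 :=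
    Nat.exists_eq_add_one.mpr (Nat.pos_of_ne_zero fun hp0 => hA' (hp0 ▸ hA))
  have : Nonempty V := let ⟨v, _⟩ := hA; ⟨v⟩
  have hk : k + 3 < Fintype.card V := h.lt_card_of_crPartition_ne fun heq => hP2' (heq ▸ hP2)
  obtain ⟨a₀, b₀, s₀⟩ := h.exists_isSingleSplit (i := k) (by omega)
  obtain ⟨a, b, s₀, rfl, rfl⟩ : ∃ a b, (crSetoid G (k + 1)).IsSingleSplit (crSetoid G k) a b ∧
      A = crClass G (k + 1) a ∧ B = crClass G (k + 1) b :=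
    s₀.exists_eq_setOf_of_mem_classes hA hA' hB hB' hAB
  obtain ⟨u₁, u₂, s₁⟩ := h.exists_isSingleSplit (i := k + 1) (by omega)
  obtain ⟨v₁, v₂, s₂⟩ := h.exists_isSingleSplit (i := k + 2) (by omega)
  obtain rfl : P2 = crClass G (k + 2) v₁ := s₂.eq_setOf_of_mem_classes_of_notMem hP2 hP2'
  obtain ⟨hP2A, hP2B⟩ := crClass_ne_crClass_of_isSingleSplit hp s₀ s₁ s₂
  exact ⟨hP2A, hP2B, four_le_ncard_pairs hp (hpmin k k.lt_add_one) s₀ s₁ s₂⟩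

/-- The second pair `P₂` in the splitting order is distinct from both pairs
`A = P_a`, `B = P_b` arising from the split of `C_{p-1}`; consequently `π^p`
contains at least `4` pairs. -/
theorem second_pair_distinct [Fintype V] (G : SimpleGraph V)
    (h : IsLongRefinement G) (p : ℕ) (hp1 : 1 ≤ p)
    (hp : ∀ C ∈ crPartition G p, C.ncard ≤ 2)
    (hpmin : ∀ q < p, ∃ C ∈ crPartition G q, 2 < C.ncard)
    (C A B : Set V)
    (hC : C ∈ crPartition G (p-1)) (hC' : C ∉ crPartition G p)
    (hA : A ∈ crPartition G p) (hA' : A ∉ crPartition G (p-1))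
    (hB : B ∈ crPartition G p) (hB' : B ∉ crPartition G (p-1))
    (hAB : A ≠ B) (hCAB : C = A ∪ B)
    (P2 : Set V) (hP2 : P2 ∈ crPartition G (p+1)) (hP2' : P2 ∉ crPartition G (p+2)) :
    P2 ≠ A ∧ P2 ≠ B ∧ 4 ≤ {D | D ∈ crPartition G p ∧ D.ncard = 2}.ncard :=
  second_pair_distinct_general G h p hp hpmin C A B hC hA hB hAB hCAB P2 hP2 hP2'
end

section
/- Let G be a graph with degree set {1, 3} whose set of degree-1 vertices is {v₁, v₁'} with v₁ ≠ v₁' and {v₁, v₁'} ∉ E(G), and let G' be obtained from G by adding the edge {v₁, v₁'}. Then for every i ∈ ℕ the Colour Refinement partitions satisfy π^i_G = π^i_{G'}; in particular G is a long-refinement graph if and only if G' is, and G' has degree set {2, 3} with exactly v₁, v₁' of degree 2. -/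
variable {V : Type*}

/-!
Adding the edge `{v₁, v₁'}` raises the degrees of exactly `v₁` and `v₁'`, from `1` to `2`, so the
degree partition `π¹` is unchanged. In a later round the new edge contributes to the neighbour
count of `v₁` one neighbour of the colour of `v₁'`, and symmetrically. Since `{v₁, v₁'}` is a
union of colour classes, and `v₁, v₁'` have the same colour whenever they are compared, two
vertices of the same colour receive the same contribution, so every refinement round yields the
same partition in both graphs.
-/

open SimpleGraph

section CrRel

variable (G : SimpleGraph V)

lemma crRel_symm {i : ℕ} {u v : V} (h : crRel G i u v) : crRel G i v u := by
  induction i with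
  | zero => trivial
  | succ i ih => exact ⟨ih h.1, fun w => (h.2 w).symm⟩

lemma crRel_trans {i : ℕ} {u v w : V} (huv : crRel G i u v) (hvw : crRel G i v w) :
    crRel G i u w := by
  induction i with
  | zero => trivial
  | succ i ih => exact ⟨ih huv.1 hvw.1, fun x => (huv.2 x).trans (hvw.2 x)⟩

lemma crRel_of_le {i j : ℕ} (hij : i ≤ j) {u v : V} (h : crRel G j u v) : crRel G i u v := by
  induction hij with
  | refl => exact h
  | step _ ih => exact ih h.1

lemma crRel_congr_left {i : ℕ} {u v : V} (h : crRel G i u v) (w : V) :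
    crRel G i u w ↔ crRel G i v w :=
  ⟨crRel_trans G (crRel_symm G h), crRel_trans G h⟩

lemma crRel_one_iff [Nonempty V] {u v : V} : crRel G 1 u v ↔ vdeg G u = vdeg G v := by
  simp only [crRel, and_true, true_and, forall_const]
  rfl

end CrRel

lemma fromRel_or_eq_and_eq (G : SimpleGraph V) (a b : V) :
    fromRel (fun x y => G.Adj x y ∨ (x = a ∧ y = b)) = G ⊔ edge a b := by
  ext x y
  simp only [fromRel_adj, sup_adj, edge_adj]
  grind [G.adj_comm, G.ne_of_adj]

section SupEdge

variable [Finite V] {G : SimpleGraph V} {a b : V}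

open scoped Classical in
lemma card_sup_edge_adj_and (hne : a ≠ b) (hab : ¬ G.Adj a b) (u : V) (P : V → Prop) :
    Nat.card {x // (G ⊔ edge a b).Adj u x ∧ P x} =
      Nat.card {x // G.Adj u x ∧ P x} +
        (if u = a ∧ P b then 1 else 0) + (if u = b ∧ P a then 1 else 0) := by
  have := Fintype.ofFinite V
  have hpoint (x : V) : (if (G ⊔ edge a b).Adj u x ∧ P x then 1 else 0) =
      (if G.Adj u x ∧ P x then 1 else 0) + (if x = b then if u = a ∧ P x then 1 else 0 else 0) +
        (if x = a then if u = b ∧ P x then 1 else 0 else 0) := by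
    simp only [sup_adj, edge_adj]
    split_ifs <;> grind [G.adj_comm, G.loopless]
  simp only [Nat.card_eq_fintype_card, Fintype.card_subtype, Finset.card_filter]
  rw [Finset.sum_congr rfl fun x _ => hpoint x, Finset.sum_add_distrib, Finset.sum_add_distrib,
    Finset.sum_ite_eq', Finset.sum_ite_eq']
  simp

lemma crRel_sup_edge (hne : a ≠ b) (hab : ¬ G.Adj a b)
    (h₁ : ∀ u v, crRel G 1 u v ↔ crRel (G ⊔ edge a b) 1 u v)
    (hpair : ∀ u v, crRel G 1 u v → (u = a ∨ u = b ↔ v = a ∨ v = b)) :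
    crRel G = crRel (G ⊔ edge a b) := by
  classical
  suffices h : ∀ i u v, crRel G i u v ↔ crRel (G ⊔ edge a b) i u v by
    funext i u v; exact propext (h i u v)
  intro i
  induction i with
  | zero => exact fun _ _ => Iff.rfl
  | succ i ih =>
    intro u v
    obtain rfl | hi := Nat.eq_zero_or_pos i
    · exact h₁ u v
    simp only [crRel, ← ih, and_congr_right_iff]
    intro huv
    have hmem := hpair u v (crRel_of_le G hi huv)
    refine forall_congr' fun w => ?_
    have hbonus :
        (if u = a ∧ crRel G i b w then 1 else 0) + (if u = b ∧ crRel G i a w then 1 else 0) =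
          (if v = a ∧ crRel G i b w then 1 else 0) + (if v = b ∧ crRel G i a w then 1 else 0) := by
      by_cases hu : u = a ∨ u = b
      · rcases hu with rfl | rfl <;> rcases hmem.mp (by simp) with rfl | rfl <;>
          simp [hne, hne.symm, crRel_congr_left G huv]
      · obtain ⟨hua, hub⟩ := not_or.mp hu
        obtain ⟨hva, hvb⟩ := not_or.mp ((not_congr hmem).mp hu)
        simp [hua, hub, hva, hvb]
    rw [card_sup_edge_adj_and hne hab, card_sup_edge_adj_and hne hab]
    omega

open scoped Classical in
lemma vdeg_sup_edge (hne : a ≠ b) (hab : ¬ G.Adj a b) (v : V) :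
    vdeg (G ⊔ edge a b) v = vdeg G v + (if v = a then 1 else 0) + (if v = b then 1 else 0) := by
  simpa [vdeg] using card_sup_edge_adj_and hne hab v fun _ => True

end SupEdge

lemma ite_eq_ite_iff_of_ne {α : Type*} {p q : Prop} [Decidable p] [Decidable q] {x y : α}
    (hxy : x ≠ y) : ((if p then x else y) = if q then x else y) ↔ (p ↔ q) := by
  by_cases p <;> by_cases q <;> simp_all [hxy.symm]

lemma crRel_one_iff_of_vdeg_eq_ite [Nonempty V] {G : SimpleGraph V} {S : V → Prop}
    [DecidablePred S] {c d : ℕ} (hcd : c ≠ d) (hdeg : ∀ v, vdeg G v = if S v then c else d)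
    (u v : V) :
    crRel G 1 u v ↔ (S u ↔ S v) := by
  rw [crRel_one_iff, hdeg, hdeg, ite_eq_ite_iff_of_ne hcd]

lemma vdeg_eq_ite_of_range_eq {G : SimpleGraph V} {S : V → Prop} [DecidablePred S] {c d : ℕ}
    (hrange : Set.range (vdeg G) = {c, d}) (hc : ∀ v, vdeg G v = c ↔ S v) (v : V) :
    vdeg G v = if S v then c else d := by
  have hv : vdeg G v ∈ ({c, d} : Set ℕ) := hrange ▸ Set.mem_range_self v
  split_ifs with h
  · exact (hc v).mpr h
  · exact hv.resolve_left ((hc v).not.mpr h)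

lemma range_ite_eq_pair {α : Type*} {S : V → Prop} [DecidablePred S] {c d : α}
    (h₁ : ∃ v, S v) (h₂ : ∃ v, ¬ S v) :
    Set.range (fun v => if S v then c else d) = {c, d} := by
  obtain ⟨v, hv⟩ := h₁
  obtain ⟨w, hw⟩ := h₂
  ext n
  constructor
  · rintro ⟨u, rfl⟩
    by_cases h : S u <;> simp [h]
  · rintro (rfl | rfl)
    exacts [⟨v, if_pos hv⟩, ⟨w, if_neg hw⟩]

/-- Adding the edge between the two degree-1 vertices of a `{1,3}`-graph does not
change any Colour Refinement partition; in particular `G` is long-refinement iff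
the augmented graph `G'` is, and `G'` has degree set `{2,3}` with exactly
`v₁, v₁'` of degree `2`. -/
theorem longRefinement_add_edge [Fintype V] (G : SimpleGraph V)
    (v₁ v₁' : V) (hne : v₁ ≠ v₁') (hnadj : ¬ G.Adj v₁ v₁')
    (hdeg : Set.range (vdeg G) = ({1, 3} : Set ℕ))
    (hd1 : ∀ v, vdeg G v = 1 ↔ (v = v₁ ∨ v = v₁')) :
    (∀ i : ℕ, crPartition G i =
        crPartition (SimpleGraph.fromRel
          (fun a b => G.Adj a b ∨ (a = v₁ ∧ b = v₁'))) i) ∧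
    (IsLongRefinement G ↔
      IsLongRefinement (SimpleGraph.fromRel
        (fun a b => G.Adj a b ∨ (a = v₁ ∧ b = v₁')))) ∧
    Set.range (vdeg (SimpleGraph.fromRel
        (fun a b => G.Adj a b ∨ (a = v₁ ∧ b = v₁')))) = ({2, 3} : Set ℕ) ∧
    ∀ v, vdeg (SimpleGraph.fromRel
        (fun a b => G.Adj a b ∨ (a = v₁ ∧ b = v₁'))) v = 2 ↔
      (v = v₁ ∨ v = v₁') := by
  classical
  have : Nonempty V := ⟨v₁⟩
  rw [fromRel_or_eq_and_eq]
  have hdegG := vdeg_eq_ite_of_range_eq hdeg hd1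
  have hdegG' : vdeg (G ⊔ edge v₁ v₁') = fun v => if v = v₁ ∨ v = v₁' then 2 else 3 := by
    funext v
    rw [vdeg_sup_edge hne hnadj, hdegG]
    by_cases h₁ : v = v₁ <;> by_cases h₁' : v = v₁' <;> simp_all
  have hrel := crRel_sup_edge hne hnadj
    (fun u v => (crRel_one_iff_of_vdeg_eq_ite (by norm_num) hdegG u v).trans
      (crRel_one_iff_of_vdeg_eq_ite (by norm_num) (congrFun hdegG') u v).symm)
    (fun u v => (crRel_one_iff_of_vdeg_eq_ite (by norm_num) hdegG u v).mp)
  have hpart (i : ℕ) : crPartition G i = crPartition (G ⊔ edge v₁ v₁') i := by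
    simp only [crPartition, crClass, hrel]
  obtain ⟨w, hw⟩ : 3 ∈ Set.range (vdeg G) := by simp [hdeg]
  have hw' : ¬ (w = v₁ ∨ w = v₁') := fun h => by simp [(hd1 w).mpr h] at hw
  refine ⟨hpart, by simp only [IsLongRefinement, hpart], ?_, fun v => ?_⟩
  · rw [hdegG']
    exact range_ite_eq_pair ⟨v₁, Or.inl rfl⟩ ⟨w, hw'⟩
  · rw [hdegG']
    by_cases h : v = v₁ ∨ v = v₁' <;> simp [h]
end
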